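/- Let n ≥ 1 and let ρ and O be 2ⁿ×2ⁿ complex matrices (indexed by bit strings in {0,1}ⁿ) with tr(ρ) = 1. Then tr(ρ O) = (2^{2n}/|𝒜ₙ|) Σ_{A ∈ 𝒜ₙ} ⟨φ^{eq}_A| ρ |φ^{eq}_A⟩ ⟨φ^{eq}_A| O |φ^{eq}_A⟩ + Σ_{x ∈ {0,1}ⁿ} ρ_{xx} O_{xx} − tr(O), where ⟨φ|M|φ⟩ := φ† M φ. -/

import Mathlib

open Finset Matrix

/-- Bit strings of length `n`, with entries viewed as `0/1` integers via `Fin 2`. -/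
abbrev Bits (n : ℕ) := Fin n → Fin 2

/-- The index set `𝒜ₙ`: symmetric `n × n` matrices with diagonal entries in `{0,1,2,3}`
and off-diagonal entries in `{0,1}` (encoded inside `Fin 4`). -/
def An (n : ℕ) : Finset (Matrix (Fin n) (Fin n) (Fin 4)) :=
  @Finset.filter _ (fun A => (∀ i j, A i j = A j i) ∧ ∀ i j, i ≠ j → (A i j : ℕ) < 2)
    (fun A => @instDecidableAnd _ _
      (@Fintype.decidableForallFintype _ _
        (fun i => @Fintype.decidableForallFintype _ _
          (fun j => instDecidableEqFin 4 (A i j) (A j i)) _) _) inferInstance) Finset.univ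

/-- The quadratic form `xᵀ A x`, computed in `ℤ` (here in `ℕ`). -/
def quadA {n : ℕ} (A : Matrix (Fin n) (Fin n) (Fin 4)) (x : Bits n) : ℕ :=
  ∑ i, ∑ j, (A i j : ℕ) * (x i : ℕ) * (x j : ℕ)

/-- The complex equatorial stabilizer state `φ^{eq}_A`. -/
noncomputable def phiEq {n : ℕ} (A : Matrix (Fin n) (Fin n) (Fin 4)) (x : Bits n) : ℂ :=
  Complex.I ^ quadA A x / (Real.sqrt (2 ^ n) : ℂ)

/-- The sandwich `⟨φ|M|φ⟩ = φ† M φ`. -/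
noncomputable def braket {ι : Type*} [Fintype ι] (φ : ι → ℂ) (M : Matrix ι ι ℂ) : ℂ :=
  star φ ⬝ᵥ (M *ᵥ φ)

/-!
Split `A ∈ 𝒜ₙ` into its diagonal `d ∈ (Fin 4)ⁿ` and its strict upper triangle `f ∈ (Fin 2)^{n(n-1)/2}`.
Then `conj φ_A(x) φ_A(y) conj φ_A(u) φ_A(v)` is `4⁻ⁿ` times a character of `(d, f)`, so summing over
`𝒜ₙ` keeps exactly the quadruples on which that character is trivial. For bit strings this happens
iff `(y, v) = (x, u)` or `(y, v) = (u, x)`, i.e. the average of `|φ_A⟩⟨φ_A| ⊗ |φ_A⟩⟨φ_A|` is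
`4⁻ⁿ (1 + SWAP - ∑ₓ |xx⟩⟨xx|)`; pairing it with `ρ ⊗ O` gives `tr ρ tr O + tr (ρ O) - ∑ₓ ρₓₓ Oₓₓ`.
-/

theorem sum_subtype_lt_eq {ι M : Type*} [Fintype ι] [LinearOrder ι] [AddCommMonoid M]
    (g : ι → ι → M) :
    ∑ p : {p : ι × ι // p.1 < p.2}, g p.1.1 p.1.2 = ∑ i, ∑ j, if i < j then g i j else 0 := by
  rw [← Finset.sum_subtype (univ.filter fun p : ι × ι => p.1 < p.2) (by simp)
    (fun p => g p.1 p.2), sum_filter, Fintype.sum_prod_type]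

theorem sum_sum_eq_sum_diag_add_sum_lt {ι M : Type*} [Fintype ι] [LinearOrder ι]
    [AddCommMonoid M] (t : ι → ι → M) :
    ∑ i, ∑ j, t i j
      = ∑ i, t i i + ∑ p : {p : ι × ι // p.1 < p.2}, (t p.1.1 p.1.2 + t p.1.2 p.1.1) := by
  have hsplit (i j : ι) : t i j = (if i = j then t i j else 0) + (if i < j then t i j else 0)
      + (if j < i then t i j else 0) := by
    rcases lt_trichotomy i j with h | rfl | h
    · simp [h, h.not_gt, h.ne]
    · simp
    · simp [h, h.not_gt, h.ne']
  rw [sum_subtype_lt_eq (fun i j => t i j + t j i)]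
  conv_lhs => rw [Finset.sum_congr rfl fun i _ => Finset.sum_congr rfl fun j _ => hsplit i j]
  simp only [sum_add_distrib, sum_ite_eq, mem_univ, if_true, ite_add_zero]
  rw [Finset.sum_comm (f := fun i j => if j < i then t i j else 0), add_assoc]

theorem sum_fin_pow_eq_ite {K : Type*} [Field K] [DecidableEq K] {m : ℕ} {ζ : K}
    (h : ζ ^ m = 1) : ∑ a : Fin m, ζ ^ (a : ℕ) = if ζ = 1 then (m : K) else 0 := by
  rw [Fin.sum_univ_eq_sum_range (ζ ^ ·)]
  split_ifs with h1
  · simp [h1]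
  · rw [geom_sum_eq h1, h, sub_self, zero_div]

theorem sum_ite_eq_or_swap {ι R : Type*} [Fintype ι] [DecidableEq ι] [CommRing R]
    (M N : Matrix ι ι R) :
    ∑ x, ∑ y, ∑ u, ∑ v, (if (y = x ∧ v = u) ∨ (y = u ∧ v = x) then M x y * N u v else 0)
      = M.trace * N.trace + (M * N).trace - ∑ x, M x x * N x x := by
  have hor (x y u v : ι) : (if (y = x ∧ v = u) ∨ (y = u ∧ v = x) then M x y * N u v else 0)
      = (if y = x ∧ v = u then M x y * N u v else 0)
        + (if y = u ∧ v = x then M x y * N u v else 0)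
        - (if y = x ∧ u = x ∧ v = x then M x y * N u v else 0) := by
    split_ifs <;> grind
  simp only [hor, sum_add_distrib, sum_sub_distrib, ite_and]
  simp [trace, mul_apply, sum_mul_sum]

abbrev Pairs (n : ℕ) := {p : Fin n × Fin n // p.1 < p.2}

def mkA {n : ℕ} (d : Fin n → Fin 4) (f : Pairs n → Fin 2) : Matrix (Fin n) (Fin n) (Fin 4) :=
  fun i j =>
    if hij : i < j then (f ⟨(i, j), hij⟩).castLE (by norm_num)
    else if hji : j < i then (f ⟨(j, i), hji⟩).castLE (by norm_num)
    else d i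

def entriesA {n : ℕ} (A : Matrix (Fin n) (Fin n) (Fin 4)) :
    (Fin n → Fin 4) × (Pairs n → Fin 2) :=
  (fun i => A i i, fun p => if h : (A p.1.1 p.1.2 : ℕ) < 2 then ⟨_, h⟩ else 0)

section mkA

variable {n : ℕ} (d : Fin n → Fin 4) (f : Pairs n → Fin 2)

theorem mkA_diag (i : Fin n) : mkA d f i i = d i := by simp [mkA]

theorem mkA_pair (p : Pairs n) : mkA d f p.1.1 p.1.2 = (f p).castLE (by norm_num) := by
  simp [mkA, p.2]

theorem mkA_pair_swap (p : Pairs n) : mkA d f p.1.2 p.1.1 = (f p).castLE (by norm_num) := by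
  simp [mkA, p.2, p.2.not_gt]

theorem mkA_mem : mkA d f ∈ An n := by
  simp only [An, mem_filter, mem_univ, true_and]
  refine ⟨fun i j => ?_, fun i j hij => ?_⟩ <;> rcases lt_trichotomy i j with h | rfl | h
  · exact (mkA_pair d f ⟨(i, j), h⟩).trans (mkA_pair_swap d f ⟨(i, j), h⟩).symm
  · rfl
  · exact (mkA_pair_swap d f ⟨(j, i), h⟩).trans (mkA_pair d f ⟨(j, i), h⟩).symm
  · rw [mkA_pair d f ⟨(i, j), h⟩]; exact (f _).isLt
  · exact absurd rfl hij
  · rw [mkA_pair_swap d f ⟨(j, i), h⟩]; exact (f _).isLt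

theorem entriesA_mkA : entriesA (mkA d f) = (d, f) := by
  refine Prod.ext (funext fun i => mkA_diag d f i) (funext fun p => ?_)
  simp only [entriesA, mkA_pair, Fin.val_castLE, (f p).isLt, dite_true]

theorem sum_mkA_mul_eq {c : Fin n → Fin n → ℕ} (hc : ∀ i j, c i j = c j i) :
    ∑ i, ∑ j, (mkA d f i j : ℕ) * c i j
      = ∑ i, (d i : ℕ) * c i i + 2 * ∑ p : Pairs n, (f p : ℕ) * c p.1.1 p.1.2 := by
  rw [sum_sum_eq_sum_diag_add_sum_lt, mul_sum]
  congr 1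
  · simp only [mkA_diag]
  · refine sum_congr rfl fun p _ => ?_
    rw [mkA_pair, mkA_pair_swap, hc p.1.2 p.1.1, Fin.val_castLE]
    ring

end mkA

theorem mkA_entriesA {n : ℕ} {A : Matrix (Fin n) (Fin n) (Fin 4)} (hA : A ∈ An n) :
    mkA (entriesA A).1 (entriesA A).2 = A := by
  simp only [An, mem_filter, mem_univ, true_and] at hA
  obtain ⟨hsymm, hoff⟩ := hA
  ext i j : 1
  rcases lt_trichotomy i j with h | rfl | h
  · rw [mkA_pair _ _ ⟨(i, j), h⟩]
    ext; simp only [entriesA, dif_pos (hoff i j h.ne), Fin.val_castLE]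
  · exact mkA_diag _ _ i
  · rw [mkA_pair_swap _ _ ⟨(j, i), h⟩, hsymm]
    ext; simp only [entriesA, dif_pos (hoff j i h.ne), Fin.val_castLE]

theorem sum_An {n : ℕ} {M : Type*} [AddCommMonoid M] (F : Matrix (Fin n) (Fin n) (Fin 4) → M) :
    ∑ A ∈ An n, F A = ∑ d : Fin n → Fin 4, ∑ f : Pairs n → Fin 2, F (mkA d f) := by
  rw [← Fintype.sum_prod_type']
  exact Finset.sum_nbij' entriesA (fun q => mkA q.1 q.2) (fun _ _ => mem_univ _)
    (fun q _ => mkA_mem q.1 q.2) (fun _ hA => mkA_entriesA hA)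
    (fun q _ => entriesA_mkA q.1 q.2) (fun _ hA => by rw [mkA_entriesA hA])

theorem card_An (n : ℕ) : (An n).card = 4 ^ n * 2 ^ Fintype.card (Pairs n) := by
  rw [card_eq_sum_ones, sum_An]
  simp

theorem sum_An_I_pow {n : ℕ} {c : Fin n → Fin n → ℕ} (hc : ∀ i j, c i j = c j i) :
    ∑ A ∈ An n, Complex.I ^ (∑ i, ∑ j, (A i j : ℕ) * c i j)
      = (An n).card * if (∀ i, 4 ∣ c i i) ∧ ∀ p : Pairs n, 2 ∣ c p.1.1 p.1.2 then 1 else 0 := by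
  have hdiag (i : Fin n) : ∑ a : Fin 4, (Complex.I ^ c i i) ^ (a : ℕ)
      = if 4 ∣ c i i then 4 else 0 := by
    have h : (Complex.I ^ c i i) ^ 4 = 1 := by
      rw [← pow_mul, pow_mul', Complex.I_pow_four, one_pow]
    simp only [sum_fin_pow_eq_ite h, Complex.isPrimitiveRoot_I.pow_eq_one_iff_dvd, Nat.cast_ofNat]
  have hpair (p : Pairs n) : ∑ b : Fin 2, ((-1 : ℂ) ^ c p.1.1 p.1.2) ^ (b : ℕ)
      = if 2 ∣ c p.1.1 p.1.2 then 2 else 0 := by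
    have h : ((-1 : ℂ) ^ c p.1.1 p.1.2) ^ 2 = 1 := by
      rw [← pow_mul, pow_mul', neg_one_sq, one_pow]
    simp only [sum_fin_pow_eq_ite h, neg_one_pow_eq_one_iff_even (by norm_num : (-1 : ℂ) ≠ 1),
      even_iff_two_dvd, Nat.cast_ofNat]
  calc ∑ A ∈ An n, Complex.I ^ (∑ i, ∑ j, (A i j : ℕ) * c i j)
      = ∑ d : Fin n → Fin 4, ∑ f : Pairs n → Fin 2,
          (∏ i, (Complex.I ^ c i i) ^ (d i : ℕ))
            * ∏ p : Pairs n, ((-1 : ℂ) ^ c p.1.1 p.1.2) ^ (f p : ℕ) := by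
        refine (sum_An _).trans (sum_congr rfl fun d _ => sum_congr rfl fun f _ => ?_)
        rw [sum_mkA_mul_eq d f hc, pow_add, pow_mul, Complex.I_sq, ← prod_pow_eq_pow_sum,
          ← prod_pow_eq_pow_sum]
        congr 1 <;> exact prod_congr rfl fun _ _ => by rw [← pow_mul, mul_comm]
    _ = (∏ i, ∑ a : Fin 4, (Complex.I ^ c i i) ^ (a : ℕ))
          * ∏ p : Pairs n, ∑ b : Fin 2, ((-1 : ℂ) ^ c p.1.1 p.1.2) ^ (b : ℕ) := by
        rw [Fintype.prod_sum, Fintype.prod_sum, sum_mul_sum]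
    _ = _ := by
        simp only [hdiag, hpair, prod_ite_zero, card_An, mem_univ, true_imp_iff, prod_const,
          card_univ, Fintype.card_fin]
        split_ifs <;> simp_all

/-- The factor `3` encodes complex conjugation: `conj i = i ^ 3`. -/
def phaseCoeff {n : ℕ} (x y u v : Bits n) (i j : Fin n) : ℕ :=
  y i * y j + v i * v j + 3 * (x i * x j + u i * u j)

theorem two_not_dvd_of_not_swap_of_not_id : ∀ a b c d a' b' c' d' : Fin 2,
    4 ∣ (c * c + d * d + 3 * (a * a + b * b) : ℕ) →
    4 ∣ (c' * c' + d' * d' + 3 * (a' * a' + b' * b') : ℕ) →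
    ¬(c = b ∧ d = a) → ¬(c' = a' ∧ d' = b') →
    ¬2 ∣ (c * c' + d * d' + 3 * (a * a' + b * b') : ℕ) := by
  decide

section phaseCoeff

variable {n : ℕ} (x y u v : Bits n)

theorem phaseCoeff_comm (i j : Fin n) : phaseCoeff x y u v i j = phaseCoeff x y u v j i := by
  simp only [phaseCoeff, mul_comm]

theorem quadA_add_three_mul_quadA (A : Matrix (Fin n) (Fin n) (Fin 4)) :
    quadA A y + quadA A v + 3 * (quadA A x + quadA A u)
      = ∑ i, ∑ j, (A i j : ℕ) * phaseCoeff x y u v i j := by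
  simp only [quadA, phaseCoeff, mul_sum, ← sum_add_distrib]
  exact sum_congr rfl fun i _ => sum_congr rfl fun j _ => by ring

theorem phaseCoeff_dvd_iff :
    ((∀ i, 4 ∣ phaseCoeff x y u v i i) ∧ ∀ p : Pairs n, 2 ∣ phaseCoeff x y u v p.1.1 p.1.2)
      ↔ (y = x ∧ v = u) ∨ (y = u ∧ v = x) := by
  constructor
  · rintro ⟨hdiag, hpair⟩
    have hall (i j : Fin n) : 2 ∣ phaseCoeff x y u v i j := by
      rcases lt_trichotomy i j with h | rfl | h
      · exact hpair ⟨(i, j), h⟩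
      · exact (dvd_mul_right 2 2).trans (hdiag i)
      · exact phaseCoeff_comm x y u v i j ▸ hpair ⟨(j, i), h⟩
    suffices (∀ i, y i = x i ∧ v i = u i) ∨ ∀ i, y i = u i ∧ v i = x i by
      simpa only [funext_iff, forall_and] using this
    by_contra hne
    simp only [not_or, not_forall] at hne
    obtain ⟨⟨i, hi⟩, ⟨j, hj⟩⟩ := hne
    exact two_not_dvd_of_not_swap_of_not_id _ _ _ _ _ _ _ _ (hdiag j) (hdiag i) hj hi (hall j i)
  · suffices h : (y = x ∧ v = u) ∨ (y = u ∧ v = x) → ∀ i j, 4 ∣ phaseCoeff x y u v i j from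
      fun hyv => ⟨fun i => h hyv i i, fun p => (dvd_mul_right 2 2).trans (h hyv _ _)⟩
    rintro (⟨hy, hv⟩ | ⟨hy, hv⟩) i j <;>
      exact ⟨x i * x j + u i * u j, by simp only [phaseCoeff, hy, hv]; ring⟩

end phaseCoeff

theorem braket_eq_sum {ι : Type*} [Fintype ι] (φ : ι → ℂ) (M : Matrix ι ι ℂ) :
    braket φ M = ∑ x, ∑ y, star (φ x) * M x y * φ y := by
  simp only [braket, dotProduct, mulVec, Pi.star_apply, mul_sum, mul_assoc]

section phiEq

variable {n : ℕ} (A : Matrix (Fin n) (Fin n) (Fin 4))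

theorem star_phiEq (x : Bits n) :
    star (phiEq A x) = Complex.I ^ (3 * quadA A x) / (Real.sqrt (2 ^ n) : ℂ) := by
  rw [phiEq, star_div₀, star_pow, pow_mul, Complex.star_def, Complex.conj_I, Complex.conj_ofReal]
  norm_num [pow_succ, Complex.I_sq]

theorem star_phiEq_mul_phiEq_mul_star_phiEq_mul_phiEq (x y u v : Bits n) :
    star (phiEq A x) * phiEq A y * (star (phiEq A u) * phiEq A v)
      = Complex.I ^ (∑ i, ∑ j, (A i j : ℕ) * phaseCoeff x y u v i j) / 2 ^ (2 * n) := by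
  have hsqrt : ((Real.sqrt (2 ^ n) : ℝ) : ℂ) ^ 4 = 2 ^ (2 * n) := by
    rw [show 4 = 2 * 2 from rfl, pow_mul, ← Complex.ofReal_pow, Real.sq_sqrt (by positivity)]
    push_cast
    ring
  rw [← quadA_add_three_mul_quadA, star_phiEq, star_phiEq, phiEq, phiEq, ← hsqrt]
  ring

end phiEq

theorem sum_braket_mul_braket {n : ℕ} (ρ O : Matrix (Bits n) (Bits n) ℂ) :
    ∑ A ∈ An n, braket (phiEq A) ρ * braket (phiEq A) O
      = (An n).card / 2 ^ (2 * n) * ∑ x, ∑ y, ∑ u, ∑ v,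
          if (y = x ∧ v = u) ∨ (y = u ∧ v = x) then ρ x y * O u v else 0 := by
  have hterm (x y u v : Bits n) :
      ∑ A ∈ An n, star (phiEq A x) * ρ x y * phiEq A y * (star (phiEq A u) * O u v * phiEq A v)
        = (An n).card / 2 ^ (2 * n)
          * if (y = x ∧ v = u) ∨ (y = u ∧ v = x) then ρ x y * O u v else 0 := by
    calc _ = ρ x y * O u v * ∑ A ∈ An n,
            Complex.I ^ (∑ i, ∑ j, (A i j : ℕ) * phaseCoeff x y u v i j) / 2 ^ (2 * n) := by
          rw [mul_sum]
          refine sum_congr rfl fun A _ => ?_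
          rw [← star_phiEq_mul_phiEq_mul_star_phiEq_mul_phiEq]
          ring
      _ = _ := by
          rw [← sum_div, sum_An_I_pow (phaseCoeff_comm x y u v)]
          simp only [phaseCoeff_dvd_iff]
          split_ifs <;> ring
  simp_rw [braket_eq_sum, sum_mul, mul_sum]
  simp only [sum_comm (s := An n), hterm]

theorem espovm_tomography_identity_general (n : ℕ)
    (ρ O : Matrix (Bits n) (Bits n) ℂ) (hρ : ρ.trace = 1) :
    (ρ * O).trace =
      ((2 : ℂ) ^ (2 * n) / ((An n).card : ℂ)) *
          (∑ A ∈ An n, braket (phiEq A) ρ * braket (phiEq A) O)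
        + (∑ x : Bits n, ρ x x * O x x) - O.trace := by
  have hcard : ((An n).card : ℂ) ≠ 0 := by simp [card_An]
  rw [sum_braket_mul_braket, sum_ite_eq_or_swap, hρ]
  field_simp
  ring

/-- the ESPOVM + computational-basis decomposition of `tr(ρ O)`. -/
theorem espovm_tomography_identity (n : ℕ) (hn : 1 ≤ n)
    (ρ O : Matrix (Bits n) (Bits n) ℂ) (hρ : ρ.trace = 1) :
    (ρ * O).trace =
      ((2 : ℂ) ^ (2 * n) / ((An n).card : ℂ)) *
          (∑ A ∈ An n, braket (phiEq A) ρ * braket (phiEq A) O)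
        + (∑ x : Bits n, ρ x x * O x x) - O.trace :=
  espovm_tomography_identity_general n ρ O hρ
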